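/- Let Γ be a finite simplicial connected graph with a cut-vertex v, so that the vertex set of Γ∖{v} is the disjoint union of two nonempty sets V₁ and V₂ with no edges of Γ joining V₁ to V₂. Let Γ₁ and Γ₂ be the induced subgraphs of Γ on V₁ ∪ {v} and V₂ ∪ {v}, respectively. Then the Bestvina–Brady group H_Γ is isomorphic to the free product H_{Γ₁} ∗ H_{Γ₂}. -/

import Mathlib

/-- The relator set of the right-angled Artin group of a simple graph:
commutators of adjacent vertices. -/
def raagRels {V : Type*} (G : SimpleGraph V) : Set (FreeGroup V) :=
  {r | ∃ v w : V, G.Adj v w ∧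
    r = FreeGroup.of v * FreeGroup.of w * (FreeGroup.of v)⁻¹ * (FreeGroup.of w)⁻¹}

/-- The right-angled Artin group of a simple graph. -/
abbrev RAAG {V : Type*} (G : SimpleGraph V) : Type _ := PresentedGroup (raagRels G)

/-- The homomorphism `A_Γ → ℤ` sending every vertex generator to `1`. -/
def bbHom {V : Type*} (G : SimpleGraph V) : RAAG G →* Multiplicative ℤ :=
  PresentedGroup.toGroup (f := fun _ : V => Multiplicative.ofAdd (1 : ℤ)) (by
    rintro r ⟨v, w, -, rfl⟩
    simp [mul_comm])


/-!
Cutting `Γ` at `v` exhibits `A_Γ` as the amalgamated product of `A_{Γ₁}` and `A_{Γ₂}` along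
`⟨v⟩ ≅ ℤ`: every edge of `Γ` lies in `Γ₁` or in `Γ₂`, so a pair of homomorphisms out of the
`A_{Γᵢ}` that agree on `v` glues to one out of `A_Γ`. The Bestvina–Brady map sends `v` to a
generator of `ℤ`, so `A_{Γᵢ} ≅ H_{Γᵢ} ⋊ ℤ`, and the amalgam of two split extensions `Nᵢ ⋊ G` along
their common complement `G` is `(N₁ ∗ N₂) ⋊ G`, with `G` acting on each factor separately. Under
this isomorphism the Bestvina–Brady map of `Γ` becomes the projection to `ℤ`, whose kernel is
`H_{Γ₁} ∗ H_{Γ₂}`.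
-/

open Monoid Multiplicative
open scoped Monoid.Coprod

namespace MulAut

variable {M N : Type*} [Monoid M] [Monoid N]

def coprodCongrHom : MulAut M × MulAut N →* MulAut (M ∗ N) where
  toFun e := MulEquiv.coprodCongr e.1 e.2
  map_one' := MulEquiv.toMonoidHom_injective <| Coprod.hom_ext rfl rfl
  map_mul' _ _ := MulEquiv.toMonoidHom_injective <| Coprod.hom_ext rfl rfl

end MulAut

namespace MonoidHom

variable {A G : Type*} [Group A] [Group G]

def toGroupExtension (φ : A →* G) (hφ : Function.Surjective φ) : GroupExtension φ.ker A G where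
  inl := φ.ker.subtype
  rightHom := φ
  inl_injective := Subtype.val_injective
  range_inl_eq_ker_rightHom := φ.ker.range_subtype
  rightHom_surjective := hφ

lemma map_zpow_toAdd {φ : A →* Multiplicative ℤ} {w : A} (hw : φ w = ofAdd 1)
    (n : Multiplicative ℤ) : φ (w ^ n.toAdd) = n := by
  rw [map_zpow, hw, ← ofAdd_zsmul, smul_eq_mul, mul_one, ofAdd_toAdd]

def zpowersSplitting (φ : A →* Multiplicative ℤ) (w : A) (hw : φ w = ofAdd 1) :
    (φ.toGroupExtension fun n => ⟨_, map_zpow_toAdd hw n⟩).Splitting where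
  toMonoidHom := zpowersHom A w
  rightInverse_rightHom := map_zpow_toAdd hw

lemma zpowersSplitting_ofAdd_one (φ : A →* Multiplicative ℤ) (w : A) (hw : φ w = ofAdd 1) :
    zpowersSplitting φ w hw (ofAdd 1) = w :=
  zpow_one w

end MonoidHom

namespace SemidirectProduct

variable {N G A : Type*} [Group N] [Group G] [Group A] {φ : G →* MulAut N}

noncomputable def kerRightHomEquiv : (rightHom : N ⋊[φ] G →* G).ker ≃* N :=
  (MulEquiv.subgroupCongr range_inl_eq_ker_rightHom).symm.trans
    (MonoidHom.ofInjective inl_injective).symm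

noncomputable def kerEquivOfMulEquiv (E : A ≃* N ⋊[φ] G) {f : A →* G}
    (hf : rightHom.comp E.toMonoidHom = f) : f.ker ≃* N :=
  (MulEquiv.subgroupCongr (hf ▸ rightHom.ker_comp_mulEquiv E)).trans <|
    (E.symm.subgroupMap _).symm.trans kerRightHomEquiv

end SemidirectProduct

namespace GroupExtension.Splitting

section

variable {N E G : Type*} [Group N] [Group E] [Group G] {S : GroupExtension N E G}
  (s : S.Splitting)

lemma semidirectProductMulEquiv_inl (n : N) :
    s.semidirectProductMulEquiv (SemidirectProduct.inl n) = S.inl n := by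
  change S.inl n * s 1 = S.inl n
  rw [map_one, mul_one]

lemma semidirectProductMulEquiv_inr (g : G) :
    s.semidirectProductMulEquiv (SemidirectProduct.inr g) = s g := by
  change S.inl 1 * s g = s g
  rw [map_one, one_mul]

lemma rightHom_semidirectProductMulEquiv (x : N ⋊[s.conjAct] G) :
    S.rightHom (s.semidirectProductMulEquiv x) = x.right :=
  congrFun s.semidirectProductToGroupExtensionEquiv.rightHom_comm x

lemma map_inl_conjAct {A : Type*} [Group A] (ι : E →* A) (g : G) (n : N) :
    ι (S.inl (s.conjAct g n)) = ι (s g) * ι (S.inl n) * (ι (s g))⁻¹ := by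
  rw [← map_inv, ← map_mul, ← map_mul]
  exact congrArg ι S.inl_conjAct_comm

end

variable {N₁ N₂ A₁ A₂ G A : Type*} [Group N₁] [Group N₂] [Group A₁] [Group A₂] [Group G]
  [Group A] {S₁ : GroupExtension N₁ A₁ G} {S₂ : GroupExtension N₂ A₂ G}
  (s₁ : S₁.Splitting) (s₂ : S₂.Splitting)

noncomputable def coprodConjAct : G →* MulAut (N₁ ∗ N₂) :=
  MulAut.coprodCongrHom.comp (s₁.conjAct.prod s₂.conjAct)

/-- A model of the amalgamated product of `A₁ ≅ N₁ ⋊ G` and `A₂ ≅ N₂ ⋊ G` along the two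
copies `s₁(G)`, `s₂(G)` of `G`. -/
abbrev Amalgam := (N₁ ∗ N₂) ⋊[coprodConjAct s₁ s₂] G

noncomputable def amalgamInl : A₁ →* Amalgam s₁ s₂ :=
  (SemidirectProduct.map Coprod.inl (MonoidHom.id G) fun _ => rfl).comp
    s₁.semidirectProductMulEquiv.symm.toMonoidHom

noncomputable def amalgamInr : A₂ →* Amalgam s₁ s₂ :=
  (SemidirectProduct.map Coprod.inr (MonoidHom.id G) fun _ => rfl).comp
    s₂.semidirectProductMulEquiv.symm.toMonoidHom

lemma amalgamInl_inl (n : N₁) :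
    amalgamInl s₁ s₂ (S₁.inl n) = SemidirectProduct.inl (Coprod.inl n) := by
  simp only [amalgamInl, MonoidHom.comp_apply, MulEquiv.coe_toMonoidHom]
  rw [← semidirectProductMulEquiv_inl s₁ n, MulEquiv.symm_apply_apply]
  rfl

lemma amalgamInr_inl (n : N₂) :
    amalgamInr s₁ s₂ (S₂.inl n) = SemidirectProduct.inl (Coprod.inr n) := by
  simp only [amalgamInr, MonoidHom.comp_apply, MulEquiv.coe_toMonoidHom]
  rw [← semidirectProductMulEquiv_inl s₂ n, MulEquiv.symm_apply_apply]
  rfl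

lemma amalgamInl_splitting (g : G) : amalgamInl s₁ s₂ (s₁ g) = SemidirectProduct.inr g := by
  simp only [amalgamInl, MonoidHom.comp_apply, MulEquiv.coe_toMonoidHom]
  rw [← semidirectProductMulEquiv_inr s₁ g, MulEquiv.symm_apply_apply]
  exact SemidirectProduct.ext (map_one _) rfl

lemma amalgamInr_splitting (g : G) : amalgamInr s₁ s₂ (s₂ g) = SemidirectProduct.inr g := by
  simp only [amalgamInr, MonoidHom.comp_apply, MulEquiv.coe_toMonoidHom]
  rw [← semidirectProductMulEquiv_inr s₂ g, MulEquiv.symm_apply_apply]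
  exact SemidirectProduct.ext (map_one _) rfl

lemma rightHom_comp_amalgamInl :
    SemidirectProduct.rightHom.comp (amalgamInl s₁ s₂) = S₁.rightHom := by
  ext a
  conv_rhs => rw [← s₁.semidirectProductMulEquiv.apply_symm_apply a]
  rw [rightHom_semidirectProductMulEquiv]
  rfl

lemma rightHom_comp_amalgamInr :
    SemidirectProduct.rightHom.comp (amalgamInr s₁ s₂) = S₂.rightHom := by
  ext a
  conv_rhs => rw [← s₂.semidirectProductMulEquiv.apply_symm_apply a]
  rw [rightHom_semidirectProductMulEquiv]
  rfl

variable {s₁ s₂} {ι₁ : A₁ →* A} {ι₂ : A₂ →* A} (h : ∀ g, ι₁ (s₁ g) = ι₂ (s₂ g))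

noncomputable def amalgamLift : Amalgam s₁ s₂ →* A :=
  SemidirectProduct.lift (Coprod.lift (ι₁.comp S₁.inl) (ι₂.comp S₂.inl)) (ι₁.comp s₁.toMonoidHom)
    fun g => Coprod.hom_ext
      (MonoidHom.ext fun n => map_inl_conjAct s₁ ι₁ g n)
      (MonoidHom.ext fun n => (map_inl_conjAct s₂ ι₂ g n).trans <| by
        change _ = ι₁ (s₁ g) * _ * (ι₁ (s₁ g))⁻¹
        rw [h g]
        rfl)

lemma amalgamLift_inl_inl (n : N₁) :
    amalgamLift h (SemidirectProduct.inl (Coprod.inl n)) = ι₁ (S₁.inl n) := by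
  simp [amalgamLift]

lemma amalgamLift_inl_inr (n : N₂) :
    amalgamLift h (SemidirectProduct.inl (Coprod.inr n)) = ι₂ (S₂.inl n) := by
  simp [amalgamLift]

lemma amalgamLift_inr (g : G) : amalgamLift h (SemidirectProduct.inr g) = ι₁ (s₁ g) :=
  SemidirectProduct.lift_inr _ _ _ g

lemma amalgamLift_comp_amalgamInl : (amalgamLift h).comp (amalgamInl s₁ s₂) = ι₁ := by
  ext a
  obtain ⟨⟨n, g⟩, rfl⟩ := s₁.semidirectProductMulEquiv.surjective a
  simp only [SemidirectProduct.mk_eq_inl_mul_inr, map_mul, MonoidHom.comp_apply,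
    semidirectProductMulEquiv_inl, semidirectProductMulEquiv_inr, amalgamInl_inl,
    amalgamInl_splitting, amalgamLift_inl_inl, amalgamLift_inr]

lemma amalgamLift_comp_amalgamInr : (amalgamLift h).comp (amalgamInr s₁ s₂) = ι₂ := by
  ext a
  obtain ⟨⟨n, g⟩, rfl⟩ := s₂.semidirectProductMulEquiv.surjective a
  simp only [SemidirectProduct.mk_eq_inl_mul_inr, map_mul, MonoidHom.comp_apply,
    semidirectProductMulEquiv_inl, semidirectProductMulEquiv_inr, amalgamInr_inl,
    amalgamInr_splitting, amalgamLift_inl_inr, amalgamLift_inr, h]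

lemma comp_amalgamLift_eq_id {Θ : A →* Amalgam s₁ s₂} (h₁ : Θ.comp ι₁ = amalgamInl s₁ s₂)
    (h₂ : Θ.comp ι₂ = amalgamInr s₁ s₂) : Θ.comp (amalgamLift h) = MonoidHom.id _ := by
  refine SemidirectProduct.hom_ext (Coprod.hom_ext ?_ ?_) ?_ <;> refine MonoidHom.ext fun x => ?_
  · simp only [MonoidHom.comp_apply, amalgamLift_inl_inl]
    exact (DFunLike.congr_fun h₁ (S₁.inl x)).trans (amalgamInl_inl s₁ s₂ x)
  · simp only [MonoidHom.comp_apply, amalgamLift_inl_inr]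
    exact (DFunLike.congr_fun h₂ (S₂.inl x)).trans (amalgamInr_inl s₁ s₂ x)
  · simp only [MonoidHom.comp_apply, amalgamLift_inr]
    exact (DFunLike.congr_fun h₁ (s₁ x)).trans (amalgamInl_splitting s₁ s₂ x)

end GroupExtension.Splitting

namespace RAAG

open GroupExtension.Splitting

variable {V : Type*} {G : SimpleGraph V} {H : Type*} [Group H]

lemma commute_of_adj {a b : V} (h : G.Adj a b) :
    Commute (PresentedGroup.of a : RAAG G) (PresentedGroup.of b) :=
  commutatorElement_eq_one_iff_commute.mp (PresentedGroup.one_of_mem ⟨a, b, h, rfl⟩)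

def lift (f : V → H) (hf : ∀ a b, G.Adj a b → Commute (f a) (f b)) : RAAG G →* H :=
  PresentedGroup.toGroup (f := f) <| by
    rintro r ⟨a, b, h, rfl⟩
    simp only [map_mul, map_inv, FreeGroup.lift_apply_of]
    exact commutatorElement_eq_one_iff_commute.mpr (hf a b h)

lemma lift_of (f : V → H) (hf : ∀ a b, G.Adj a b → Commute (f a) (f b)) (u : V) :
    lift f hf (.of u) = f u :=
  PresentedGroup.toGroup.of _

variable (G) in
lemma bbHom_of (u : V) : bbHom G (.of u) = ofAdd 1 :=
  PresentedGroup.toGroup.of _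

variable (G) in
def induceHom (S : Set V) : RAAG (G.induce S) →* RAAG G :=
  lift (fun u => .of (u : V)) fun _ _ h => commute_of_adj h

lemma induceHom_of {S : Set V} (u : S) : induceHom G S (.of u) = .of (u : V) :=
  lift_of _ _ u

lemma bbHom_comp_induceHom (S : Set V) :
    (bbHom G).comp (induceHom G S) = bbHom (G.induce S) :=
  PresentedGroup.ext fun u => by
    rw [MonoidHom.comp_apply, induceHom_of, bbHom_of, bbHom_of]

variable {S₁ S₂ : Set V}

lemma hom_ext_of_cover (hcover : ∀ u, u ∈ S₁ ∨ u ∈ S₂) {f g : RAAG G →* H}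
    (h₁ : f.comp (induceHom G S₁) = g.comp (induceHom G S₁))
    (h₂ : f.comp (induceHom G S₂) = g.comp (induceHom G S₂)) : f = g :=
  PresentedGroup.ext fun u => (hcover u).elim
    (fun hu => by simpa [induceHom_of] using DFunLike.congr_fun h₁ (.of ⟨u, hu⟩))
    (fun hu => by simpa [induceHom_of] using DFunLike.congr_fun h₂ (.of ⟨u, hu⟩))

section Glue

open Classical in
noncomputable def glue (hcover : ∀ u, u ∈ S₁ ∨ u ∈ S₂) (f₁ : RAAG (G.induce S₁) →* H)
    (f₂ : RAAG (G.induce S₂) →* H) (u : V) : H :=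
  if h : u ∈ S₁ then f₁ (.of ⟨u, h⟩) else f₂ (.of ⟨u, (hcover u).resolve_left h⟩)

variable {hcover : ∀ u, u ∈ S₁ ∨ u ∈ S₂} {f₁ : RAAG (G.induce S₁) →* H}
  {f₂ : RAAG (G.induce S₂) →* H}

lemma glue_of_mem_left {u : V} (hu : u ∈ S₁) : glue hcover f₁ f₂ u = f₁ (.of ⟨u, hu⟩) :=
  dif_pos hu

lemma glue_of_mem_right
    (hagree : ∀ u (h₁ : u ∈ S₁) (h₂ : u ∈ S₂), f₁ (.of ⟨u, h₁⟩) = f₂ (.of ⟨u, h₂⟩))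
    {u : V} (hu : u ∈ S₂) : glue hcover f₁ f₂ u = f₂ (.of ⟨u, hu⟩) := by
  by_cases h₁ : u ∈ S₁
  · rw [glue_of_mem_left h₁, hagree u h₁ hu]
  · exact dif_neg h₁

variable (hcover) (hedge : ∀ a b, G.Adj a b → a ∈ S₁ ∧ b ∈ S₁ ∨ a ∈ S₂ ∧ b ∈ S₂)
  (hagree : ∀ u (h₁ : u ∈ S₁) (h₂ : u ∈ S₂), f₁ (.of ⟨u, h₁⟩) = f₂ (.of ⟨u, h₂⟩))

noncomputable def liftOfCover : RAAG G →* H :=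
  lift (glue hcover f₁ f₂) fun a b hab => by
    rcases hedge a b hab with ⟨ha, hb⟩ | ⟨ha, hb⟩
    · rw [glue_of_mem_left ha, glue_of_mem_left hb]
      exact (commute_of_adj (G := G.induce S₁) (a := ⟨a, ha⟩) (b := ⟨b, hb⟩) hab).map f₁
    · rw [glue_of_mem_right hagree ha, glue_of_mem_right hagree hb]
      exact (commute_of_adj (G := G.induce S₂) (a := ⟨a, ha⟩) (b := ⟨b, hb⟩) hab).map f₂

lemma liftOfCover_comp_induceHom_left :
    (liftOfCover hcover hedge hagree).comp (induceHom G S₁) = f₁ :=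
  PresentedGroup.ext fun u => by
    rw [MonoidHom.comp_apply, induceHom_of, liftOfCover, lift_of, glue_of_mem_left u.2]

lemma liftOfCover_comp_induceHom_right :
    (liftOfCover hcover hedge hagree).comp (induceHom G S₂) = f₂ :=
  PresentedGroup.ext fun u => by
    rw [MonoidHom.comp_apply, induceHom_of, liftOfCover, lift_of, glue_of_mem_right hagree u.2]

end Glue

theorem exists_mulEquiv_amalgam {v : V} (hv₁ : v ∈ S₁) (hv₂ : v ∈ S₂)
    (hcover : ∀ u, u ∈ S₁ ∨ u ∈ S₂)
    (hedge : ∀ a b, G.Adj a b → a ∈ S₁ ∧ b ∈ S₁ ∨ a ∈ S₂ ∧ b ∈ S₂)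
    (hinter : ∀ u ∈ S₁, u ∈ S₂ → u = v) :
    ∃ E : RAAG G ≃* Amalgam (MonoidHom.zpowersSplitting _ _ (bbHom_of (G.induce S₁) ⟨v, hv₁⟩))
        (MonoidHom.zpowersSplitting _ _ (bbHom_of (G.induce S₂) ⟨v, hv₂⟩)),
      SemidirectProduct.rightHom.comp E.toMonoidHom = bbHom G := by
  set s₁ := MonoidHom.zpowersSplitting _ _ (bbHom_of (G.induce S₁) ⟨v, hv₁⟩)
  set s₂ := MonoidHom.zpowersSplitting _ _ (bbHom_of (G.induce S₂) ⟨v, hv₂⟩)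
  have hι (g : Multiplicative ℤ) : induceHom G S₁ (s₁ g) = induceHom G S₂ (s₂ g) := by
    change induceHom G S₁ (.of _ ^ g.toAdd) = induceHom G S₂ (.of _ ^ g.toAdd)
    rw [map_zpow, map_zpow, induceHom_of, induceHom_of]
  have hagree (u : V) (h₁ : u ∈ S₁) (h₂ : u ∈ S₂) :
      amalgamInl s₁ s₂ (.of ⟨u, h₁⟩) = amalgamInr s₁ s₂ (.of ⟨u, h₂⟩) := by
    obtain rfl := hinter u h₁ h₂
    calc amalgamInl s₁ s₂ (.of ⟨u, h₁⟩)
        = amalgamInl s₁ s₂ (s₁ (ofAdd 1)) :=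
          congrArg _ (MonoidHom.zpowersSplitting_ofAdd_one ..).symm
      _ = amalgamInr s₁ s₂ (s₂ (ofAdd 1)) :=
          (amalgamInl_splitting s₁ s₂ _).trans (amalgamInr_splitting s₁ s₂ _).symm
      _ = amalgamInr s₁ s₂ (.of ⟨u, h₂⟩) := congrArg _ (MonoidHom.zpowersSplitting_ofAdd_one ..)
  have hΘ₁ := liftOfCover_comp_induceHom_left hcover hedge hagree
  have hΘ₂ := liftOfCover_comp_induceHom_right hcover hedge hagree
  set Θ := liftOfCover hcover hedge hagree
  have hΦΘ : (amalgamLift hι).comp Θ = MonoidHom.id _ := hom_ext_of_cover hcover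
    (by rw [MonoidHom.comp_assoc, hΘ₁, amalgamLift_comp_amalgamInl]; rfl)
    (by rw [MonoidHom.comp_assoc, hΘ₂, amalgamLift_comp_amalgamInr]; rfl)
  refine ⟨Θ.toMulEquiv _ hΦΘ (comp_amalgamLift_eq_id hι hΘ₁ hΘ₂), hom_ext_of_cover hcover ?_ ?_⟩
  · change (SemidirectProduct.rightHom.comp Θ).comp _ = _
    rw [MonoidHom.comp_assoc, hΘ₁, rightHom_comp_amalgamInl, bbHom_comp_induceHom]
    rfl
  · change (SemidirectProduct.rightHom.comp Θ).comp _ = _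
    rw [MonoidHom.comp_assoc, hΘ₂, rightHom_comp_amalgamInr, bbHom_comp_induceHom]
    rfl

end RAAG

theorem bb_cut_vertex_free_product_general {V : Type*} (G : SimpleGraph V)
    (v : V) (V₁ V₂ : Set V)
    (hdisj : Disjoint V₁ V₂)
    (hcover : V₁ ∪ V₂ = ({v}ᶜ : Set V))
    (hnoedge : ∀ a ∈ V₁, ∀ b ∈ V₂, ¬ G.Adj a b) :
    Nonempty ((bbHom G).ker ≃*
      Monoid.Coprod ((bbHom (G.induce (V₁ ∪ {v}))).ker)
        ((bbHom (G.induce (V₂ ∪ {v}))).ker)) := by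
  have hmem (u : V) : u ∈ V₁ ∪ {v} ∨ u ∈ V₂ ∪ {v} := by
    by_cases hu : u = v
    · exact Or.inl (Or.inr hu)
    · exact (hcover.symm ▸ hu : u ∈ V₁ ∪ V₂).imp Or.inl Or.inl
  have hedge (a b : V) (hab : G.Adj a b) :
      a ∈ V₁ ∪ {v} ∧ b ∈ V₁ ∪ {v} ∨ a ∈ V₂ ∪ {v} ∧ b ∈ V₂ ∪ {v} := by
    have := hnoedge a; have := hnoedge b; have := hab.symm
    rcases hmem a with ha | ha <;> rcases hmem b with hb | hb <;> aesop
  have hinter (u : V) (h₁ : u ∈ V₁ ∪ {v}) (h₂ : u ∈ V₂ ∪ {v}) : u = v :=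
    h₁.elim (fun h₁ => h₂.resolve_left (Set.disjoint_left.mp hdisj h₁)) id
  obtain ⟨E, hE⟩ :=
    RAAG.exists_mulEquiv_amalgam (G := G) (Or.inr rfl) (Or.inr rfl) hmem hedge hinter
  exact ⟨SemidirectProduct.kerEquivOfMulEquiv E hE⟩

/-- If a finite connected simplicial graph `Γ` has a cut-vertex `v`, with
`Γ ∖ {v} = V₁ ⊔ V₂` and no edges between `V₁` and `V₂`, then the Bestvina–Brady
group `H_Γ` is isomorphic to the free product `H_{Γ₁} ∗ H_{Γ₂}`, where `Γᵢ` is the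
induced subgraph on `Vᵢ ∪ {v}`. -/
theorem bb_cut_vertex_free_product {V : Type*} [Fintype V] (G : SimpleGraph V)
    (hconn : G.Connected) (v : V) (V₁ V₂ : Set V)
    (h1 : V₁.Nonempty) (h2 : V₂.Nonempty) (hdisj : Disjoint V₁ V₂)
    (hcover : V₁ ∪ V₂ = ({v}ᶜ : Set V))
    (hnoedge : ∀ a ∈ V₁, ∀ b ∈ V₂, ¬ G.Adj a b) :
    Nonempty ((bbHom G).ker ≃*
      Monoid.Coprod ((bbHom (G.induce (V₁ ∪ {v}))).ker)
        ((bbHom (G.induce (V₂ ∪ {v}))).ker)) :=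
  bb_cut_vertex_free_product_general G v V₁ V₂ hdisj hcover hnoedge
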